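/- Let u(z) = ‖z‖ − 1 on the unit ball of ℂⁿ (extended by 0 outside, inside the double ball), viewing ℂⁿ ≅ ℝ^{2n}. The contact set {Γ_u = ũ} (convex envelope taken over the double ball B_2) consists of the single point {0}. More generally, if u is a function on the unit ball with u ≥ ‖z‖ − 1 and u(0) = −1, then the contact set of u is contained in {0}. -/

import Mathlib

open Set Metric

namespace Stmt12

noncomputable section
open Classical

variable {m : ℕ}

/-- The extension `ũ` of `min{u,0}` by `0` from the unit ball to the rest of the space. -/
def tildeExt (u : EuclideanSpace ℝ (Fin m) → ℝ) : EuclideanSpace ℝ (Fin m) → ℝ :=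
  fun x => if x ∈ ball (0 : EuclideanSpace ℝ (Fin m)) 1 then min (u x) 0 else 0

/-- The convex envelope over the double ball `B₂`: the supremum of all affine
functions lying below `w` on `B₂`. -/
def convexEnvelope (w : EuclideanSpace ℝ (Fin m) → ℝ) (x : EuclideanSpace ℝ (Fin m)) : ℝ :=
  sSup {t : ℝ | ∃ p : EuclideanSpace ℝ (Fin m), ∃ c : ℝ,
    (∀ ξ ∈ ball (0 : EuclideanSpace ℝ (Fin m)) 2, c + (inner ℝ p ξ : ℝ) ≤ w ξ) ∧
    t = c + (inner ℝ p x : ℝ)}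

/-- The contact set `{Γ_u = ũ}` inside `B₂`. -/
def contactSet (u : EuclideanSpace ℝ (Fin m) → ℝ) : Set (EuclideanSpace ℝ (Fin m)) :=
  {x ∈ ball (0 : EuclideanSpace ℝ (Fin m)) 2 |
    convexEnvelope (tildeExt u) x = tildeExt u x}

section TildeExt

variable {u : EuclideanSpace ℝ (Fin m) → ℝ}

lemma tildeExt_eq_zero_of_one_le_norm {x : EuclideanSpace ℝ (Fin m)} (hx : 1 ≤ ‖x‖) : tildeExt u x = 0 := by
  simp [tildeExt, hx.not_gt]

lemma tildeExt_zero (hu0 : u 0 = -1) : tildeExt u 0 = -1 := by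
  simp [tildeExt, hu0]

lemma min_norm_sub_one_le_tildeExt (hu : ∀ z ∈ ball (0 : EuclideanSpace ℝ (Fin m)) 1, ‖z‖ - 1 ≤ u z)
    (x : EuclideanSpace ℝ (Fin m)) : min (‖x‖ - 1) 0 ≤ tildeExt u x := by
  unfold tildeExt
  split_ifs with hx
  · exact min_le_min_right 0 (hu x hx)
  · exact min_le_right _ _

lemma neg_one_le_tildeExt (hu : ∀ z ∈ ball (0 : EuclideanSpace ℝ (Fin m)) 1, ‖z‖ - 1 ≤ u z)
    (x : EuclideanSpace ℝ (Fin m)) : -1 ≤ tildeExt u x :=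
  (le_min (by linarith [norm_nonneg x]) (by norm_num)).trans (min_norm_sub_one_le_tildeExt hu x)

end TildeExt

section ConvexEnvelope

variable {w : EuclideanSpace ℝ (Fin m) → ℝ} {x : EuclideanSpace ℝ (Fin m)}

lemma le_convexEnvelope {p : EuclideanSpace ℝ (Fin m)} {c : ℝ}
    (hx : x ∈ ball (0 : EuclideanSpace ℝ (Fin m)) 2)
    (hl : ∀ ξ ∈ ball (0 : EuclideanSpace ℝ (Fin m)) 2, c + inner ℝ p ξ ≤ w ξ) :
    c + inner ℝ p x ≤ convexEnvelope w x :=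
  le_csSup ⟨w x, by rintro _ ⟨q, d, hq, rfl⟩; exact hq x hx⟩ ⟨p, c, hl, rfl⟩

lemma convexEnvelope_le {a b : ℝ} (hw : ∀ ξ ∈ ball (0 : EuclideanSpace ℝ (Fin m)) 2, a ≤ w ξ)
    (h : ∀ p c, (∀ ξ ∈ ball (0 : EuclideanSpace ℝ (Fin m)) 2, c + inner ℝ p ξ ≤ w ξ) →
      c + inner ℝ p x ≤ b) :
    convexEnvelope w x ≤ b :=
  csSup_le ⟨_, 0, a, by simpa using hw, rfl⟩ (by rintro _ ⟨p, c, hl, rfl⟩; exact h p c hl)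

lemma convexEnvelope_le_self {a : ℝ} (hw : ∀ ξ ∈ ball (0 : EuclideanSpace ℝ (Fin m)) 2, a ≤ w ξ)
    (hx : x ∈ ball (0 : EuclideanSpace ℝ (Fin m)) 2) : convexEnvelope w x ≤ w x :=
  convexEnvelope_le hw fun _ _ hl => hl x hx

end ConvexEnvelope

/- `c + ⟪p, t • y⟫ = t * (c + ⟪p, y⟫) + (1 - t) * c`. -/
lemma add_inner_smul_le_sub_one {F : Type*} [NormedAddCommGroup F] [InnerProductSpace ℝ F]
    {p y : F} {c t : ℝ} (hc : c ≤ -1) (hy : c + inner ℝ p y ≤ 0) (ht₀ : 0 ≤ t) (ht₁ : t ≤ 1) :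
    c + inner ℝ p (t • y) ≤ t - 1 := by
  rw [real_inner_smul_right]
  nlinarith

section ContactSet

variable {u : EuclideanSpace ℝ (Fin m) → ℝ}
  (hu : ∀ z ∈ ball (0 : EuclideanSpace ℝ (Fin m)) 1, ‖z‖ - 1 ≤ u z) (hu0 : u 0 = -1)
include hu hu0

/- Pick `r ∈ (max 1 ‖x‖, 2)` and the point `y` of norm `r` on the ray through `x`: there `ũ y = 0`,
while `ũ 0 = -1`, so every affine minorant is at most `‖x‖ / r - 1 < min (‖x‖ - 1) 0 ≤ ũ x`. -/
lemma convexEnvelope_tildeExt_lt {x : EuclideanSpace ℝ (Fin m)} (hx0 : x ≠ 0)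
    (hx : x ∈ ball (0 : EuclideanSpace ℝ (Fin m)) 2) :
    convexEnvelope (tildeExt u) x < tildeExt u x := by
  have hx2 : ‖x‖ < 2 := mem_ball_zero_iff.mp hx
  have hxpos : 0 < ‖x‖ := norm_pos_iff.mpr hx0
  obtain ⟨r, hr1, hrx, hr2⟩ : ∃ r, 1 < r ∧ ‖x‖ < r ∧ r < 2 :=
    ⟨(max 1 ‖x‖ + 2) / 2, by grind, by grind, by grind⟩
  set y := (r / ‖x‖) • x
  have hy : ‖y‖ = r := by
    rw [norm_smul, Real.norm_of_nonneg (by positivity), div_mul_cancel₀ _ hxpos.ne']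
  have hxy : x = (‖x‖ / r) • y := by
    rw [smul_smul, div_mul_div_comm, mul_comm, div_self (by positivity), one_smul]
  have hbound : convexEnvelope (tildeExt u) x ≤ ‖x‖ / r - 1 := by
    refine convexEnvelope_le (fun ξ _ => neg_one_le_tildeExt hu ξ) fun p c hl => ?_
    have hc : c ≤ -1 := by simpa [tildeExt_zero hu0] using hl 0 (by simp)
    have hy0 : c + inner ℝ p y ≤ 0 :=
      (hl y (by simp [hy, hr2])).trans_eq (tildeExt_eq_zero_of_one_le_norm (by linarith))
    simpa only [← hxy] using
      add_inner_smul_le_sub_one hc hy0 (by positivity) ((div_le_one (by linarith)).mpr hrx.le)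
  calc convexEnvelope (tildeExt u) x ≤ ‖x‖ / r - 1 := hbound
    _ < min (‖x‖ - 1) 0 :=
      lt_min (by linarith [div_lt_self hxpos hr1]) (by linarith [(div_lt_one (by linarith)).mpr hrx])
    _ ≤ tildeExt u x := min_norm_sub_one_le_tildeExt hu x

lemma convexEnvelope_tildeExt_zero : convexEnvelope (tildeExt u) 0 = -1 := by
  refine le_antisymm ?_ ?_
  · exact (convexEnvelope_le_self (fun ξ _ => neg_one_le_tildeExt hu ξ) (by simp)).trans_eq
      (tildeExt_zero hu0)
  · simpa using le_convexEnvelope (p := 0) (c := -1) (by simp)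
      fun ξ _ => by simpa using neg_one_le_tildeExt hu ξ

lemma contactSet_eq_singleton_zero : contactSet u = {0} := by
  ext x
  constructor
  · rintro ⟨hx, hΓ⟩
    by_contra hx0
    exact (convexEnvelope_tildeExt_lt hu hu0 hx0 hx).ne hΓ
  · rintro rfl
    exact ⟨by simp, by rw [convexEnvelope_tildeExt_zero hu hu0, tildeExt_zero hu0]⟩

end ContactSet

/-- for `u(z) = ‖z‖ - 1` on the unit ball of `ℂⁿ ≅ ℝ^{2n}`, the contact
set consists of the single point `0`; more generally, if `u ≥ ‖z‖ - 1` on the unit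
ball and `u(0) = -1`, then the contact set of `u` is contained in `{0}`. -/
theorem contactSet_of_cone (n : ℕ) :
    (∀ u : EuclideanSpace ℝ (Fin (2 * n)) → ℝ,
      (∀ z ∈ ball (0 : EuclideanSpace ℝ (Fin (2 * n))) 1, ‖z‖ - 1 ≤ u z) →
      u 0 = -1 → contactSet u ⊆ {0}) ∧
    contactSet (fun z : EuclideanSpace ℝ (Fin (2 * n)) => ‖z‖ - 1) = {0} :=
  ⟨fun _ hu hu0 => (contactSet_eq_singleton_zero hu hu0).subset,
    contactSet_eq_singleton_zero (fun _ _ => le_rfl) (by simp)⟩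

end

end Stmt12
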